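/- arXiv:math/0502212 — 5 statements merged into one kernel-verified Lean document; each statement's English description precedes it below -/
import Mathlib

section
/- Let C be a small category and let F be an automorphism of C which is special, i.e. F(A) is isomorphic to A for every object A of C. Then F can be represented in the form F = F0 ∘ F1, where F0 is an inner automorphism of C (an automorphism naturally isomorphic to the identity functor) and F1 is an automorphism of C satisfying F1(A) = A for every object A of C. -/
/-!
Choose isomorphisms `η A : F A ≅ A`. Conjugating `F` by them gives a functor `F₁ ≅ F` that fixes
every object; it is still fully faithful, hence an automorphism whose inverse is computed by
preimages. Then `F₀ := F₁⁻¹ ⋙ F` is an automorphism with `F = F₁ ⋙ F₀`, and whiskering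
`F ≅ F₁` by `F₁⁻¹` shows `F₀ ≅ F₁⁻¹ ⋙ F₁ = 𝟭`.
-/

open CategoryTheory

universe u

namespace CategoryTheory.Functor

variable {C D E : Type*} [Category C] [Category D] [Category E]

def fullyFaithfulOfCompEqId {F : C ⥤ D} {G : D ⥤ C} (hFG : F ⋙ G = 𝟭 C)
    (hGF : G ⋙ F = 𝟭 D) : F.FullyFaithful :=
  (Equivalence.mk F G (eqToIso hFG.symm) (eqToIso hGF)).fullyFaithfulFunctor

lemma comp_comp_comp_eq_id {A : C ⥤ D} {B : D ⥤ E} {B' : E ⥤ D} {A' : D ⥤ C}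
    (hA : A ⋙ A' = 𝟭 C) (hB : B ⋙ B' = 𝟭 D) : (A ⋙ B) ⋙ (B' ⋙ A') = 𝟭 C := by
  change A ⋙ (B ⋙ B') ⋙ A' = 𝟭 C
  rw [hB]
  exact hA

variable {F : C ⥤ C} {η : ∀ X, F.obj X ≅ X} (hF : (F.copyObj id η).FullyFaithful)

def copyObjIdInv : C ⥤ C where
  obj X := X
  map f := hF.preimage f
  map_id _ := hF.preimage_id
  map_comp f g := hF.preimage_comp f g

lemma copyObj_comp_copyObjIdInv : F.copyObj id η ⋙ copyObjIdInv hF = 𝟭 C :=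
  Functor.hext (fun _ => rfl) (fun _ _ f => heq_of_eq (hF.preimage_map f))

lemma copyObjIdInv_comp_copyObj : copyObjIdInv hF ⋙ F.copyObj id η = 𝟭 C :=
  Functor.hext (fun _ => rfl) (fun _ _ f => heq_of_eq (hF.map_preimage f))

end CategoryTheory.Functor

open Functor in
/-- Every special automorphism `F` of a small category `C` (i.e. an invertible
endofunctor with `F.obj A ≅ A` for every object `A`) factors as `F = F0 ∘ F1` where `F0` is an
inner automorphism (naturally isomorphic to the identity functor) and `F1` is an automorphism
fixing every object. -/
theorem special_automorphism_factorization
    {C : Type u} [SmallCategory C] (F G : C ⥤ C)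
    (hFG : F ⋙ G = 𝟭 C) (hGF : G ⋙ F = 𝟭 C)
    (hspecial : ∀ A : C, Nonempty (F.obj A ≅ A)) :
    ∃ F0 F1 : C ⥤ C,
      (∃ G0 : C ⥤ C, F0 ⋙ G0 = 𝟭 C ∧ G0 ⋙ F0 = 𝟭 C) ∧
      (∃ G1 : C ⥤ C, F1 ⋙ G1 = 𝟭 C ∧ G1 ⋙ F1 = 𝟭 C) ∧
      Nonempty (F0 ≅ 𝟭 C) ∧
      (∀ A : C, F1.obj A = A) ∧
      F = F1 ⋙ F0 := by
  let η A := (hspecial A).some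
  let e : F ≅ F.copyObj id η := F.isoCopyObj id η
  let hF1 := (fullyFaithfulOfCompEqId hFG hGF).ofIso e
  have hF1G1 := copyObj_comp_copyObjIdInv hF1
  have hG1F1 := copyObjIdInv_comp_copyObj hF1
  refine ⟨copyObjIdInv hF1 ⋙ F, F.copyObj id η,
    ⟨G ⋙ F.copyObj id η, comp_comp_comp_eq_id hG1F1 hFG, comp_comp_comp_eq_id hGF hF1G1⟩,
    ⟨copyObjIdInv hF1, hF1G1, hG1F1⟩,
    ⟨isoWhiskerLeft _ e ≪≫ eqToIso hG1F1⟩, fun _ => rfl, ?_⟩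
  rw [← Functor.assoc, hF1G1, Functor.id_comp]
end

section
/- Let K be a left noetherian ring with unit and let C0 denote the category whose objects are the finitely generated free left K-modules and whose morphisms are the K-linear maps. Let φ be an automorphism of C0 which fixes every object. For α ∈ K let ν_α be the endomorphism of the rank-one free module Kx0 determined by ν_α(x0) = α·x0, and let σ : K → K be the bijection determined by φ(ν_α) = ν_{σ(α)}. Then σ is a ring automorphism of K; in particular σ is additive: σ(α + β) = σ(α) + σ(β) for all α, β ∈ K. -/
open CategoryTheory

universe u

/-- The category `C0` of finitely generated free left `K`-modules, realized as the full
subcategory of `ModuleCat K` on the modules that are finite and free. -/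
def FreeModCat (K : Type u) [Ring K] : Type (u + 1) :=
  CategoryTheory.ObjectProperty.FullSubcategory
    (fun M : ModuleCat.{u} K => Module.Finite K M ∧ Module.Free K M)

instance (K : Type u) [Ring K] : Category (FreeModCat K) :=
  CategoryTheory.ObjectProperty.FullSubcategory.category _

/-- The rank-one free module `K·x₀` (that is, `K` as a left module over itself) as an object of
the category of finitely generated free left `K`-modules. -/
def KxObj (K : Type u) [Ring K] : FreeModCat K :=
  ⟨ModuleCat.of K K, ⟨inferInstanceAs (Module.Finite K K), inferInstanceAs (Module.Free K K)⟩⟩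

/-- The endomorphism `ν_α` of `K·x₀` determined by `ν_α (x₀) = α • x₀`; concretely it is right
multiplication by `α`. -/
def nuHom (K : Type u) [Ring K] (α : K) : KxObj K ⟶ KxObj K :=
  ObjectProperty.homMk (ModuleCat.ofHom (show K →ₗ[K] K from
    { toFun := fun v => v * α
      map_add' := fun u v => by simp [add_mul]
      map_smul' := fun l v => by simp [smul_eq_mul, mul_assoc] }))

/-!
Finitely generated free modules are closed under binary products, so `FreeModCat K` has binary
biproducts. An automorphism of a preadditive category with binary biproducts is an equivalence,
hence preserves them, hence is additive on hom-groups. Since `α ↦ ν_α` is injective, additive,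
and turns products into composites, `σ` inherits additivity and multiplicativity from `φ`.
-/

open Limits

namespace FreeModCat

variable (K : Type u) [Ring K]

abbrev IsFiniteFree : ObjectProperty (ModuleCat.{u} K) :=
  fun M => Module.Finite K M ∧ Module.Free K M

instance : (IsFiniteFree K).IsClosedUnderIsomorphisms where
  of_iso e h := ⟨h.1.equiv e.toLinearEquiv, h.2.of_equiv e.toLinearEquiv⟩

instance : (IsFiniteFree K).IsClosedUnderBinaryProducts :=
  .mk' fun _ ⟨F, hF⟩ => by
    have e := HasLimit.isoOfNatIso (diagramIsoPair F) ≪≫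
      limit.isoLimitCone (ModuleCat.binaryProductLimitCone _ _)
    obtain ⟨_, _⟩ := hF ⟨.left⟩
    obtain ⟨_, _⟩ := hF ⟨.right⟩
    exact (IsFiniteFree K).prop_of_iso e.symm ⟨Module.Finite.prod, Module.Free.prod K _ _⟩

instance : Preadditive (FreeModCat K) :=
  inferInstanceAs (Preadditive (IsFiniteFree K).FullSubcategory)

instance : HasBinaryBiproducts (FreeModCat K) :=
  have : HasBinaryProducts (FreeModCat K) :=
    inferInstanceAs (HasBinaryProducts (IsFiniteFree K).FullSubcategory)
  .of_hasBinaryProducts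

variable {K}

@[ext]
lemma hom_ext {A B : FreeModCat K} {f g : A ⟶ B} (h : ∀ v, f.hom.hom v = g.hom.hom v) :
    f = g :=
  InducedCategory.hom_ext (ModuleCat.hom_ext (LinearMap.ext h))

end FreeModCat

section nuHom

variable {K : Type u} [Ring K]

lemma nuHom_injective : Function.Injective (nuHom K) := fun α β h =>
  (one_mul α).symm.trans ((congrArg (fun f => f.hom.hom (1 : K)) h).trans (one_mul β))

lemma nuHom_add (α β : K) : nuHom K (α + β) = nuHom K α + nuHom K β := by
  ext (v : K)
  exact mul_add v α β

lemma nuHom_mul (α β : K) : nuHom K (α * β) = nuHom K α ≫ nuHom K β := by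
  ext (v : K)
  exact (mul_assoc v α β).symm

end nuHom

theorem object_fixing_automorphism_induces_ring_automorphism_general
    (K : Type u) [Ring K]
    (φ ψ : FreeModCat K ⥤ FreeModCat K)
    (hφψ : φ ⋙ ψ = 𝟭 (FreeModCat K)) (hψφ : ψ ⋙ φ = 𝟭 (FreeModCat K))
    (hfix : ∀ A : FreeModCat K, φ.obj A = A)
    (σ : K → K) (hσbij : Function.Bijective σ)
    (hσ : ∀ α : K, φ.map (nuHom K α) =
      eqToHom (hfix (KxObj K)) ≫ nuHom K (σ α) ≫ eqToHom (hfix (KxObj K)).symm) :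
    ∃ ρ : K ≃+* K, ∀ α : K, ρ α = σ α := by
  have : φ.IsEquivalence :=
    (CategoryTheory.Equivalence.mk φ ψ (eqToIso hφψ.symm) (eqToIso hψφ)).isEquivalence_functor
  have : φ.Additive := φ.additive_of_preserves_binary_products
  have hνσ (α : K) : nuHom K (σ α) =
      eqToHom (hfix (KxObj K)).symm ≫ φ.map (nuHom K α) ≫ eqToHom (hfix (KxObj K)) := by
    simp [hσ]
  refine ⟨{ Equiv.ofBijective σ hσbij with
    map_mul' := fun α β => nuHom_injective ?_
    map_add' := fun α β => nuHom_injective ?_ }, fun _ => rfl⟩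
  · simp only [Equiv.toFun_as_coe, Equiv.ofBijective_apply, hνσ, nuHom_mul, Functor.map_comp]
    simp
  · simp only [Equiv.toFun_as_coe, Equiv.ofBijective_apply, hνσ, nuHom_add, Functor.map_add,
      Preadditive.add_comp, Preadditive.comp_add]

/-- Let `K` be a left noetherian ring, `φ` an automorphism of the category of
finitely generated free left `K`-modules fixing every object, and `σ : K → K` the bijection
determined by `φ(ν_α) = ν_{σ α}`.  Then `σ` is a ring automorphism of `K` (in particular, `σ` is
additive). -/
theorem object_fixing_automorphism_induces_ring_automorphism
    (K : Type u) [Ring K] [IsNoetherianRing K]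
    (φ ψ : FreeModCat K ⥤ FreeModCat K)
    (hφψ : φ ⋙ ψ = 𝟭 (FreeModCat K)) (hψφ : ψ ⋙ φ = 𝟭 (FreeModCat K))
    (hfix : ∀ A : FreeModCat K, φ.obj A = A)
    (σ : K → K) (hσbij : Function.Bijective σ)
    (hσ : ∀ α : K, φ.map (nuHom K α) =
      eqToHom (hfix (KxObj K)) ≫ nuHom K (σ α) ≫ eqToHom (hfix (KxObj K)).symm) :
    ∃ ρ : K ≃+* K, ∀ α : K, ρ α = σ α :=
  object_fixing_automorphism_induces_ring_automorphism_general K φ ψ hφψ hψφ hfix σ hσbij hσ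
end

section
/- Let K be a ring with unit such that every automorphism of the category C0 of finitely generated free left K-modules is semi-inner. Then the group Out(C0) = Aut(C0)/Int(C0) of outer automorphisms of the category C0 is isomorphic to the group Out(K) = Aut(K)/Int(K) of outer automorphisms of the ring K. -/
open CategoryTheory

universe u

/-- An endofunctor `φ` of the category of finitely generated free left `K`-modules is semi-inner
if there are a ring automorphism `σ` of `K` and, for every object `A`, a `σ`-semilinear bijection
`s A : A → φ(A)` such that `φ(ν) = s B ∘ ν ∘ (s A)⁻¹` for every `K`-linear map `ν : A ⟶ B`. -/
def IsSemiInner (K : Type u) [Ring K] (φ : FreeModCat K ⥤ FreeModCat K) : Prop :=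
  ∃ σ : K ≃+* K, ∃ s : ∀ A : FreeModCat K, A.obj → (φ.obj A).obj,
    (∀ A : FreeModCat K, Function.Bijective (s A)) ∧
    (∀ (A : FreeModCat K) (a a' : A.obj), s A (a + a') = s A a + s A a') ∧
    (∀ (A : FreeModCat K) (l : K) (a : A.obj), s A (l • a) = σ l • s A a) ∧
    (∀ (A B : FreeModCat K) (ν : A ⟶ B) (a : A.obj),
      (show (φ.obj A).obj ⟶ (φ.obj B).obj from (φ.map ν).hom) (s A a)
        = s B ((show A.obj ⟶ B.obj from ν.hom) a))

/-- The group `Aut C0` of (strict) automorphisms of the category of finitely generated free left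
`K`-modules: invertible endofunctors of `C0`, i.e. automorphisms of `C0` as an object of the
category `Cat` of categories. -/
def CatAut (K : Type u) [Ring K] :=
  Aut (Cat.of (FreeModCat K))

noncomputable instance (K : Type u) [Ring K] : Group (CatAut K) :=
  inferInstanceAs (Group (Aut (Cat.of (FreeModCat K))))

/-- The subgroup `Int C0 ≤ Aut C0` of inner automorphisms, i.e. those automorphisms of the
category `C0` that are naturally isomorphic to the identity functor. -/
def innerCatAuts (K : Type u) [Ring K] : Subgroup (CatAut K) where
  carrier := { F : CatAut K |
    Nonempty (F.hom.toFunctor ≅ 𝟭 (FreeModCat K)) }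
  one_mem' := ⟨Iso.refl _⟩
  mul_mem' := by
    rintro F G ⟨i⟩ ⟨j⟩
    exact ⟨Functor.isoWhiskerLeft G.hom.toFunctor i ≪≫
      Functor.rightUnitor _ ≪≫ j⟩
  inv_mem' := by
    rintro F ⟨i⟩
    exact ⟨(Functor.leftUnitor _).symm ≪≫
      Functor.isoWhiskerRight i.symm F.inv.toFunctor ≪≫
      eqToIso (show F.hom.toFunctor ⋙ F.inv.toFunctor = 𝟭 _ from congrArg Cat.Hom.toFunctor F.hom_inv_id)⟩

instance (K : Type u) [Ring K] : (innerCatAuts K).Normal := by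
  constructor
  intro n hn g
  obtain ⟨i⟩ := hn
  refine ⟨?_⟩
  have : (g * n * g⁻¹).hom.toFunctor
      = (g.inv.toFunctor ⋙ n.hom.toFunctor) ⋙ g.hom.toFunctor := rfl
  rw [this]
  exact Functor.isoWhiskerRight (Functor.isoWhiskerLeft g.inv.toFunctor i ≪≫
      Functor.rightUnitor _) g.hom.toFunctor ≪≫
    eqToIso (show g.inv.toFunctor ⋙ g.hom.toFunctor = 𝟭 _ from congrArg Cat.Hom.toFunctor g.inv_hom_id)

/-- The subgroup `Int K ≤ Aut K` of inner automorphisms of the ring `K`: the conjugations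
`a ↦ u * a * u⁻¹` by invertible elements `u` of `K`. -/
def innerRingAuts (K : Type u) [Ring K] : Subgroup (RingAut K) where
  carrier := { σ : RingAut K | ∃ u : Kˣ, ∀ a : K, σ a = ↑u * a * ↑u⁻¹ }
  one_mem' := ⟨1, fun a => by show a = ↑(1 : Kˣ) * a * ↑(1 : Kˣ)⁻¹; simp⟩
  mul_mem' := by
    rintro σ τ ⟨u, hu⟩ ⟨v, hv⟩
    refine ⟨u * v, fun a => ?_⟩
    have : (σ * τ) a = σ (τ a) := rfl
    rw [this, hv, hu]
    simp [mul_assoc]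
  inv_mem' := by
    rintro σ ⟨u, hu⟩
    refine ⟨u⁻¹, fun a => σ.injective ?_⟩
    have : σ (σ⁻¹ a) = a := σ.apply_symm_apply a
    rw [this, hu]
    simp [mul_assoc]

instance (K : Type u) [Ring K] : (innerRingAuts K).Normal := by
  constructor
  rintro n ⟨u, hu⟩ g
  refine ⟨Units.map (g : RingAut K).toRingHom.toMonoidHom u, fun a => ?_⟩
  have h1 : (g * n * g⁻¹) a = g (n (g⁻¹ a)) := rfl
  have h2 : g (g⁻¹ a) = a := g.apply_symm_apply a
  rw [h1, hu, map_mul, map_mul, h2, ← map_inv]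
  rfl

/-!
A semi-inner automorphism `F` of `C0` determines its ring automorphism up to an inner one: if
`(σ, s)` and `(τ, s')` both witness that `F` is semi-inner, then on the object `K` the bijection
`s⁻¹ ∘ s'` commutes with all right multiplications (they are morphisms of `C0`), so it is left
multiplication by a unit `w`, and its `σ⁻¹τ`-semilinearity says that `σ⁻¹τ` is conjugation by `w`.
Composing witnesses makes `F ↦ [σ]` a homomorphism `Aut C0 → Out K`. It is surjective because
restriction of scalars along `σ⁻¹` is an automorphism of `C0`, semi-inner with respect to `σ`
via the identity maps. Its kernel is `Int C0`: an isomorphism `F ≅ 𝟭` transports a witness for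
`F` to one for `𝟭`, whose ring automorphism is therefore inner; conversely, if `σ` is conjugation
by `u`, then the maps `u⁻¹ • s_A` are `K`-linear and natural in `A`.
-/

section

variable {K : Type u} [Ring K]

lemma ModuleCat.finite_and_free_restrictScalars (e : K ≃+* K) (M : ModuleCat.{u} K)
    (hM : Module.Finite K M ∧ Module.Free K M) :
    Module.Finite K ((ModuleCat.restrictScalars (e : K →+* K)).obj M) ∧
      Module.Free K ((ModuleCat.restrictScalars (e : K →+* K)).obj M) := by
  obtain ⟨_, _⟩ := hM
  have := RingHomInvPair.of_ringEquiv e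
  have := RingHomInvPair.of_ringEquiv_symm e
  let f : M ≃ₛₗ[(e.symm : K →+* K)] (ModuleCat.restrictScalars (e : K →+* K)).obj M :=
    { Equiv.refl M with
      map_add' := fun _ _ => rfl
      map_smul' := fun l m => (congrArg (· • m) (e.apply_symm_apply l)).symm }
  exact ⟨Module.Finite.of_surjective f.toLinearMap f.surjective, Module.Free.of_equiv f⟩

namespace FreeModCat

noncomputable def restrictScalars (e : K ≃+* K) : FreeModCat K ⥤ FreeModCat K :=
  ObjectProperty.lift _ (ObjectProperty.ι _ ⋙ ModuleCat.restrictScalars (e : K →+* K))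
    fun A => ModuleCat.finite_and_free_restrictScalars e A.obj A.property

lemma restrictScalars_comp (e f : K ≃+* K) :
    restrictScalars e ⋙ restrictScalars f = restrictScalars (f.trans e) := rfl

noncomputable def restrictScalarsAut (e : K ≃+* K) : CatAut K where
  hom := (restrictScalars e).toCatHom
  inv := (restrictScalars e.symm).toCatHom
  hom_inv_id := Cat.Hom.ext <| (restrictScalars_comp e e.symm).trans <| by
    rw [e.symm_trans_self]; rfl
  inv_hom_id := Cat.Hom.ext <| (restrictScalars_comp e.symm e).trans <| by
    rw [e.self_trans_symm]; rfl

abbrev self (K : Type u) [Ring K] : FreeModCat K :=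
  ⟨ModuleCat.of K K, Module.Finite.self K, Module.Free.self K⟩

def mulRight (c : K) : self K ⟶ self K :=
  ObjectProperty.homMk (ModuleCat.ofHom (LinearMap.toSpanSingleton K K c))

end FreeModCat

open FreeModCat

lemma mem_innerRingAuts_of_bijective_semilinear {ρ : RingAut K} {r : K → K}
    (hr : Function.Bijective r) (hmul : ∀ x c : K, r (x * c) = r x * c)
    (hsemi : ∀ l x : K, r (l * x) = ρ l * r x) : ρ ∈ innerRingAuts K := by
  have hr_eq : ∀ x, r x = r 1 * x := fun x => by simpa using hmul 1 x
  obtain ⟨w, hw⟩ : IsUnit (r 1) :=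
    IsUnit.isUnit_iff_mulLeft_bijective.2 (by simpa only [← hr_eq] using hr)
  refine ⟨w, fun l => ?_⟩
  calc ρ l = ρ l * r 1 * ↑w⁻¹ := by rw [← hw, Units.mul_inv_cancel_right]
    _ = ↑w * l * ↑w⁻¹ := by rw [← hsemi, mul_one, hr_eq, hw]

structure IsSemiInnerBy (φ : FreeModCat K ⥤ FreeModCat K) (σ : K ≃+* K)
    (s : ∀ A : FreeModCat K, A.obj → (φ.obj A).obj) : Prop where
  bijective (A : FreeModCat K) : Function.Bijective (s A)
  map_add (A : FreeModCat K) (a a' : A.obj) : s A (a + a') = s A a + s A a'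
  map_smul (A : FreeModCat K) (l : K) (a : A.obj) : s A (l • a) = σ l • s A a
  map_hom {A B : FreeModCat K} (ν : A ⟶ B) (a : A.obj) : (φ.map ν).hom (s A a) = s B (ν.hom a)

lemma isSemiInner_iff (φ : FreeModCat K ⥤ FreeModCat K) :
    IsSemiInner K φ ↔ ∃ σ s, IsSemiInnerBy φ σ s :=
  ⟨fun ⟨σ, s, h₁, h₂, h₃, h₄⟩ => ⟨σ, s, ⟨h₁, h₂, h₃, fun ν => h₄ _ _ ν⟩⟩,
    fun ⟨σ, s, h⟩ => ⟨σ, s, h.1, h.2, h.3, fun _ _ => h.4⟩⟩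

namespace IsSemiInnerBy

variable {φ ψ : FreeModCat K ⥤ FreeModCat K} {σ τ : K ≃+* K}
  {s s' : ∀ A : FreeModCat K, A.obj → (φ.obj A).obj}
  {t : ∀ A : FreeModCat K, A.obj → (ψ.obj A).obj}

lemma id : IsSemiInnerBy (𝟭 (FreeModCat K)) (RingEquiv.refl K) (fun _ a => a) :=
  ⟨fun _ => Function.bijective_id, fun _ _ _ => rfl, fun _ _ _ => rfl, fun _ _ => rfl⟩

lemma comp (hs : IsSemiInnerBy φ σ s) (ht : IsSemiInnerBy ψ τ t) :
    IsSemiInnerBy (ψ ⋙ φ) (τ.trans σ) (fun A a => s (ψ.obj A) (t A a)) where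
  bijective A := (hs.bijective _).comp (ht.bijective A)
  map_add A a a' := by simp only [ht.map_add, hs.map_add]
  map_smul A l a := by simp only [ht.map_smul, hs.map_smul]; rfl
  map_hom ν a := by simp only [Functor.comp_map, hs.map_hom, ht.map_hom]

lemma restrictScalars (e : K ≃+* K) :
    IsSemiInnerBy (FreeModCat.restrictScalars e) e.symm (fun _ a => a) where
  bijective _ := Function.bijective_id
  map_add _ _ _ := rfl
  map_smul _ l a := (congrArg (· • a) (e.apply_symm_apply l)).symm
  map_hom _ _ := rfl

lemma of_iso (hs : IsSemiInnerBy φ σ s) (i : φ ≅ ψ) :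
    IsSemiInnerBy ψ σ (fun A a => (i.hom.app A).hom (s A a)) where
  bijective A := ((ObjectProperty.ι _).mapIso (i.app A)).toLinearEquiv.bijective.comp
    (hs.bijective A)
  map_add A a a' := by rw [hs.map_add]; exact (i.hom.app A).hom.hom.map_add _ _
  map_smul A l a := by rw [hs.map_smul]; exact (i.hom.app A).hom.hom.map_smul _ _
  map_hom ν a := by
    rw [← hs.map_hom]
    exact congr($(i.hom.naturality ν).hom (s _ a)).symm

lemma mk_eq_mk (hs : IsSemiInnerBy φ σ s) (hs' : IsSemiInnerBy φ τ s') :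
    (σ : RingAut K ⧸ innerRingAuts K) = τ := by
  rw [QuotientGroup.eq]
  let e := Equiv.ofBijective _ (hs.bijective (self K))
  refine mem_innerRingAuts_of_bijective_semilinear (r := fun x => e.symm (s' (self K) x))
    (e.symm.bijective.comp (hs'.bijective _)) (fun x c => e.injective ?_)
    (fun l x => e.injective ?_)
  · calc e (e.symm (s' _ (x * c))) = (φ.map (mulRight c)).hom (s' _ x) := by
          rw [e.apply_symm_apply, hs'.map_hom]; rfl
      _ = (φ.map (mulRight c)).hom (e (e.symm (s' _ x))) := by rw [e.apply_symm_apply]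
      _ = e (e.symm (s' _ x) * c) := hs.map_hom _ _
  · calc e (e.symm (s' _ (l * x))) = τ l • s' _ x := by
          rw [e.apply_symm_apply]; exact hs'.map_smul (self K) l x
      _ = σ (σ.symm (τ l)) • e (e.symm (s' _ x)) := by
          rw [e.apply_symm_apply, σ.apply_symm_apply]
      _ = e (σ.symm (τ l) * e.symm (s' _ x)) := (hs.map_smul _ _ _).symm

lemma nonempty_iso_id_of_mem (hs : IsSemiInnerBy φ σ s) (hσ : σ ∈ innerRingAuts K) :
    Nonempty (φ ≅ 𝟭 _) := by
  obtain ⟨u, hu⟩ := hσ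
  let e (A : FreeModCat K) : A.obj ≃ₗ[K] (φ.obj A).obj := LinearEquiv.ofBijective
    { toFun a := u⁻¹ • s A a
      map_add' a a' := by rw [hs.map_add, smul_add]
      map_smul' l a := by
        rw [hs.map_smul, Units.smul_def, Units.smul_def, smul_smul, smul_smul, hu l,
          ← mul_assoc, ← mul_assoc, Units.inv_mul, one_mul]
        rfl }
    ((MulAction.bijective u⁻¹).comp (hs.bijective A))
  refine ⟨(NatIso.ofComponents (fun A => ObjectProperty.isoMk _ (e A).toModuleIso) ?_).symm⟩
  intro A B ν
  refine InducedCategory.hom_ext (ModuleCat.hom_ext (LinearMap.ext fun a => ?_))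
  exact ((congrArg (u⁻¹ • ·) (hs.map_hom ν a)).symm.trans
    ((φ.map ν).hom.hom.map_smul (↑u⁻¹ : K) _).symm)

lemma nonempty_iso_id_iff (hs : IsSemiInnerBy φ σ s) :
    Nonempty (φ ≅ 𝟭 _) ↔ σ ∈ innerRingAuts K :=
  ⟨fun ⟨i⟩ => (QuotientGroup.eq_one_iff (σ : RingAut K)).1 (id.mk_eq_mk (hs.of_iso i)).symm,
    hs.nonempty_iso_id_of_mem⟩

end IsSemiInnerBy

section outerClass

variable (hsemi : ∀ F : CatAut K, IsSemiInner K F.hom.toFunctor)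

noncomputable def outerClass : CatAut K →* RingAut K ⧸ innerRingAuts K :=
  have h F := ((isSemiInner_iff _).1 (hsemi F)).choose_spec.choose_spec
  MonoidHom.mk' (fun F => ((isSemiInner_iff _).1 (hsemi F)).choose) fun F G =>
    (h (F * G)).mk_eq_mk ((h F).comp (h G))

lemma outerClass_eq {F : CatAut K} {σ : K ≃+* K}
    {s : ∀ A : FreeModCat K, A.obj → (F.hom.toFunctor.obj A).obj}
    (hs : IsSemiInnerBy F.hom.toFunctor σ s) : outerClass hsemi F = σ :=
  ((isSemiInner_iff _).1 (hsemi F)).choose_spec.choose_spec.mk_eq_mk hs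

lemma outerClass_surjective : Function.Surjective (outerClass hsemi) := fun q =>
  QuotientGroup.induction_on q fun σ =>
    ⟨restrictScalarsAut σ.symm, outerClass_eq hsemi (IsSemiInnerBy.restrictScalars σ.symm)⟩

lemma ker_outerClass : (outerClass hsemi).ker = innerCatAuts K := by
  ext F
  obtain ⟨σ, s, hs⟩ := (isSemiInner_iff _).1 (hsemi F)
  rw [MonoidHom.mem_ker, outerClass_eq hsemi hs, QuotientGroup.eq_one_iff]
  exact hs.nonempty_iso_id_iff.symm

end outerClass

end

/-- If every automorphism of the category `C0` of finitely generated free left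
`K`-modules is semi-inner, then the group `Out C0 = Aut C0 / Int C0` of outer automorphisms of
the category `C0` is isomorphic to the group `Out K = Aut K / Int K` of outer automorphisms of
the ring `K`. -/
theorem outCat_mulEquiv_outRing
    (K : Type u) [Ring K]
    (hsemi : ∀ F : CatAut K, IsSemiInner K F.hom.toFunctor) :
    Nonempty ((CatAut K ⧸ innerCatAuts K) ≃* (RingAut K ⧸ innerRingAuts K)) :=
  ⟨(QuotientGroup.quotientMulEquivOfEq (ker_outerClass hsemi).symm).trans
    (QuotientGroup.quotientKerEquivOfSurjective _ (outerClass_surjective hsemi))⟩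
end

section
/- Let K be an infinite field, W the free Lie algebra over K on two generators x and y, and T a characteristic automorphism of End(W). Let σ ∈ End(W) be the idempotent endomorphism determined by σ(x) = x and σ(y) = 0. Then T(σ) is an L-endomorphism of W, i.e. T(σ)(x) and T(σ)(y) lie in the K-linear span of x and y. -/
noncomputable section

open FreeLieAlgebra

/-- The free Lie algebra over `K` on the two generators `x = of K 0` and `y = of K 1`. -/
abbrev LieW (K : Type*) [Field K] := FreeLieAlgebra K (Fin 2)

/-- The monoid (under composition) of Lie algebra endomorphisms of the free Lie algebra on two
generators. -/
abbrev LieEnd (K : Type*) [Field K] := LieW K →ₗ⁅K⁆ LieW K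

instance (K : Type*) [Field K] : Monoid (LieEnd K) where
  mul f g := f.comp g
  one := LieHom.id
  mul_assoc f g h := rfl
  one_mul f := by ext w; rfl
  mul_one f := by ext w; rfl

@[simp] theorem LieEnd.mul_def {K : Type*} [Field K] (f g : LieEnd K) : f * g = f.comp g := rfl
@[simp] theorem LieEnd.one_def {K : Type*} [Field K] : (1 : LieEnd K) = LieHom.id := rfl

/-- The endomorphism `τ_λ` of the free Lie algebra on two generators, determined by
`τ_λ x = λ • x` and `τ_λ y = λ • y`.  For `λ ≠ 0` it is an automorphism. -/
def lieTau (K : Type*) [Field K] (l : K) : LieEnd K :=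
  FreeLieAlgebra.lift K fun i => l • FreeLieAlgebra.of K i

/-- An endomorphism `σ` of the free Lie algebra `W` on the two generators `x, y` is an
`L`-endomorphism if `σ x` and `σ y` lie in the `K`-linear span of `x` and `y`. -/
def IsLEndo {K : Type*} [Field K] (σ : LieEnd K) : Prop :=
  ∀ i : Fin 2, σ (FreeLieAlgebra.of K i) ∈
    Submodule.span K ({FreeLieAlgebra.of K 0, FreeLieAlgebra.of K 1} : Set (LieW K))

/-- A monoid automorphism `T` of `End W` is characteristic if there is a multiplicative
homomorphism `χ : Aut W →* K*` with `T ξ = τ_{χ ξ} ∘ ξ` for every automorphism `ξ` of `W`. -/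
def IsCharacteristic {K : Type*} [Field K] (T : MulAut (LieEnd K)) : Prop :=
  ∃ χ : (LieEnd K)ˣ →* Kˣ, ∀ ξ : (LieEnd K)ˣ, T ↑ξ = lieTau K ↑(χ ξ) * ↑ξ

/-!
For `l ≠ 0` the diagonal automorphism `δ = diag 1 l` (`x ↦ x`, `y ↦ l • y`) satisfies
`δ σ = σ = σ δ`, and `T δ = diag c (c * l)` with `c = χ δ`. Evaluating `T σ * T δ = T σ`
on `x` and `y` forces `c = 1` when `T σ x ≠ 0`, and `c * l = 1` when `T σ x = 0 ≠ T σ y`;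
so the image of `T σ` is fixed by all `diag 1 l`, or by all `diag l 1`, `l ≠ 0`.
As `W` is spanned by elements homogeneous in `y`, `l ↦ diag 1 l w` is a polynomial map;
over an infinite field, being fixed for `l ≠ 0` forces being fixed at `l = 0`,
and `diag 1 0` maps `W` into the abelian subalgebra `K x`.
-/

section PolynomialMaps

open Polynomial

variable (R M : Type*) [CommRing R] [AddCommGroup M] [Module R M]

/-- The maps `r ↦ ∑ i, r ^ i • mᵢ` for finitely many coefficients `mᵢ : M`. -/
def polynomialMaps : Submodule R (R → M) :=
  LinearMap.range (LinearMap.pi fun r : R => PolynomialModule.eval (M := M) r)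

variable {R M}

theorem monomial_mem_polynomialMaps (n : ℕ) (m : M) :
    (fun r : R => r ^ n • m) ∈ polynomialMaps R M :=
  ⟨PolynomialModule.single R n m, funext fun r => PolynomialModule.eval_single r n m⟩

theorem PolynomialModule.eval_equivPolynomial (p : PolynomialModule R R) (r : R) :
    (PolynomialModule.equivPolynomial p).eval r = PolynomialModule.eval r p := by
  induction p using PolynomialModule.induction_linear with
  | zero => simp
  | add p q hp hq => simp only [map_add, Polynomial.eval_add, hp, hq]
  | single n a => simp [mul_comm]

variable {K V : Type*} [Field K] [AddCommGroup V] [Module K V]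

theorem eq_zero_of_mem_polynomialMaps {v : K → V} (hv : v ∈ polynomialMaps K V)
    (hzero : {l | v l = 0}.Infinite) : v = 0 := by
  obtain ⟨p, rfl⟩ := hv
  funext l
  rw [Pi.zero_apply, ← Module.forall_dual_apply_eq_zero_iff K]
  intro φ
  let q : K[X] := PolynomialModule.equivPolynomial (PolynomialModule.map K φ p)
  have hq : ∀ l, q.eval l = φ (PolynomialModule.eval l p) := fun l => by
    rw [PolynomialModule.eval_equivPolynomial, ← PolynomialModule.eval_map K φ p l]
    rfl
  have hq0 : q = 0 := q.eq_zero_of_infinite_isRoot <| hzero.mono fun l hl => by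
    simp_all [IsRoot]
  simpa [hq0] using (hq l).symm

theorem apply_zero_eq_of_mem_polynomialMaps [Infinite K] {v : K → V}
    (hv : v ∈ polynomialMaps K V) {w : V} (hw : ∀ l ≠ 0, v l = w) : v 0 = w := by
  have hsub : (v - fun l => l ^ 0 • w) ∈ polynomialMaps K V :=
    sub_mem hv (monomial_mem_polynomialMaps 0 w)
  have := congrFun (eq_zero_of_mem_polynomialMaps hsub <|
    (Set.finite_singleton 0).infinite_compl.mono fun l hl => by simp_all) 0
  simpa [sub_eq_zero] using this

end PolynomialMaps

theorem LieSubalgebra.coe_lieSpan_eq_span_of_lie_mem {R L : Type*} [CommRing R] [LieRing L]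
    [LieAlgebra R L] {s : Set L} (hs : ∀ x ∈ s, ∀ y ∈ s, ⁅x, y⁆ ∈ s) :
    (lieSpan R L s : Submodule R L) = Submodule.span R s := by
  suffices ∀ {x y}, x ∈ Submodule.span R s → y ∈ Submodule.span R s →
      ⁅x, y⁆ ∈ Submodule.span R s by
    refine le_antisymm ?_ submodule_span_le_lieSpan
    change _ ≤ ({ Submodule.span R s with lie_mem' := this } : LieSubalgebra R L)
    rw [lieSpan_le]
    exact Submodule.subset_span
  intro x y hx hy
  induction hx, hy using Submodule.span_induction₂ with
  | mem_mem x y hx hy => exact Submodule.subset_span (hs x hx y hy)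
  | zero_left y hy => simp
  | zero_right x hx => simp
  | add_left x y z _ _ _ hx hy => simp [add_mem hx hy]
  | add_right x y z _ _ _ hx hy => simp [add_mem hx hy]
  | smul_left r x y _ _ h => simp [Submodule.smul_mem _ r h]
  | smul_right r x y _ _ h => simp [Submodule.smul_mem _ r h]

section Homogeneous

variable {R L : Type*} [CommRing R] [LieRing L] [LieAlgebra R L]

def IsHomogeneousFor (F : R → L →ₗ⁅R⁆ L) (v : L) : Prop :=
  ∃ n : ℕ, ∀ r, F r v = r ^ n • v

theorem IsHomogeneousFor.lie {F : R → L →ₗ⁅R⁆ L} {u v : L} (hu : IsHomogeneousFor F u)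
    (hv : IsHomogeneousFor F v) : IsHomogeneousFor F ⁅u, v⁆ := by
  obtain ⟨m, hm⟩ := hu
  obtain ⟨n, hn⟩ := hv
  refine ⟨m + n, fun r => ?_⟩
  rw [LieHom.map_lie, hm, hn, smul_lie, lie_smul, smul_smul, pow_add]

end Homogeneous

namespace FreeLieAlgebra

open LieSubalgebra

variable {R X : Type*} [CommRing R]

theorem lieSpan_range_of : lieSpan R (FreeLieAlgebra R X) (Set.range (of R)) = ⊤ := by
  set S := lieSpan R (FreeLieAlgebra R X) (Set.range (of R))
  have hS : S.incl.comp (lift R fun i => ⟨of R i, subset_lieSpan ⟨i, rfl⟩⟩) = LieHom.id :=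
    hom_ext fun i => by simp
  refine eq_top_iff.mpr fun w _ => ?_
  rw [← LieHom.id_apply (R := R) w, ← hS]
  exact Subtype.prop _

theorem lift_apply_mem_lieSpan {L : Type*} [LieRing L] [LieAlgebra R L] (f : X → L)
    (w : FreeLieAlgebra R X) : lift R f w ∈ lieSpan R L (Set.range f) := by
  have hrange : Set.range f = lift R f '' Set.range (of R) := by
    rw [← Set.range_comp, of_comp_lift]
  rw [hrange, ← map_lieSpan, lieSpan_range_of]
  exact ⟨w, trivial, rfl⟩

variable {K : Type*} [Field K] {F : K → FreeLieAlgebra K X →ₗ⁅K⁆ FreeLieAlgebra K X}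

theorem span_isHomogeneousFor_eq_top (hF : ∀ i, IsHomogeneousFor F (of K i)) :
    Submodule.span K {v | IsHomogeneousFor F v} = ⊤ := by
  rw [← coe_lieSpan_eq_span_of_lie_mem fun _ hu _ hv => hu.lie hv, eq_top_iff,
    ← LieSubalgebra.top_toSubmodule, LieSubalgebra.toSubmodule_le_toSubmodule,
    ← lieSpan_range_of, lieSpan_le]
  rintro _ ⟨i, rfl⟩
  exact subset_lieSpan (hF i)

theorem mem_polynomialMaps_of_isHomogeneousFor (hF : ∀ i, IsHomogeneousFor F (of K i))
    (w : FreeLieAlgebra K X) : (fun l => F l w) ∈ polynomialMaps K (FreeLieAlgebra K X) := by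
  have hle : Submodule.span K {v | IsHomogeneousFor F v} ≤
      (polynomialMaps K (FreeLieAlgebra K X)).comap (LinearMap.pi fun l => (F l).toLinearMap) := by
    rw [Submodule.span_le]
    rintro v ⟨n, hn⟩
    change (fun l => F l v) ∈ polynomialMaps K (FreeLieAlgebra K X)
    simpa only [hn] using monomial_mem_polynomialMaps (R := K) n v
  exact hle (span_isHomogeneousFor_eq_top hF ▸ Submodule.mem_top)

theorem apply_zero_eq_of_forall_ne_zero [Infinite K] (hF : ∀ i, IsHomogeneousFor F (of K i))
    {w : FreeLieAlgebra K X} (hw : ∀ l ≠ 0, F l w = w) : F 0 w = w :=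
  apply_zero_eq_of_mem_polynomialMaps (mem_polynomialMaps_of_isHomogeneousFor hF w) hw

end FreeLieAlgebra

namespace LieEnd

open FreeLieAlgebra

variable {K : Type*} [Field K]

def diag (a b : K) : LieEnd K :=
  lift K fun i : Fin 2 => if i = 0 then a • of K 0 else b • of K 1

@[simp] theorem diag_of_zero (a b : K) : diag a b (of K 0) = a • of K 0 := by
  simp [diag]

@[simp] theorem diag_of_one (a b : K) : diag a b (of K 1) = b • of K 1 := by
  simp [diag]

theorem ext_of {f g : LieEnd K} (h₀ : f (of K 0) = g (of K 0)) (h₁ : f (of K 1) = g (of K 1)) :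
    f = g :=
  hom_ext <| Fin.forall_fin_two.mpr ⟨h₀, h₁⟩

theorem diag_mul_diag (a b c d : K) : diag a b * diag c d = diag (a * c) (b * d) :=
  ext_of (by simp [smul_smul, mul_comm]) (by simp [smul_smul, mul_comm])

theorem diag_one_one : diag (1 : K) 1 = 1 :=
  ext_of (by simp) (by simp)

theorem lieTau_eq_diag (l : K) : lieTau K l = diag l l :=
  ext_of (by simp [lieTau]) (by simp [lieTau])

theorem lift_ite_eq_diag_one_zero :
    (lift K fun i : Fin 2 => if i = 0 then of K (0 : Fin 2) else 0) = diag (1 : K) 0 :=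
  ext_of (by simp) (by simp)

def diagUnit (a b : Kˣ) : (LieEnd K)ˣ where
  val := diag a b
  inv := diag ↑a⁻¹ ↑b⁻¹
  val_inv := by rw [diag_mul_diag, Units.mul_inv, Units.mul_inv, diag_one_one]
  inv_val := by rw [diag_mul_diag, Units.inv_mul, Units.inv_mul, diag_one_one]

theorem diag_apply_mem_span_of_mul_eq_zero {a b : K} (hab : a * b = 0) (w : LieW K) :
    diag a b w ∈ Submodule.span K ({of K 0, of K 1} : Set (LieW K)) := by
  let g : Fin 2 → LieW K := fun i => if i = 0 then a • of K 0 else b • of K 1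
  have hcomm : ∀ u ∈ Set.range g, ∀ v ∈ Set.range g, ⁅u, v⁆ = 0 := by
    rintro _ ⟨i, rfl⟩ _ ⟨j, rfl⟩
    fin_cases i <;> fin_cases j <;> simp [g, smul_smul, hab, mul_comm b a]
  have hw : diag a b w ∈ LieSubalgebra.lieSpan K (LieW K) (Set.range g) :=
    lift_apply_mem_lieSpan g w
  rw [← LieSubalgebra.mem_toSubmodule,
    LieSubalgebra.coe_lieSpan_eq_span_of_forall_lie_eq_zero hcomm] at hw
  refine Submodule.span_le.mpr (Set.range_subset_iff.mpr fun i => ?_) hw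
  fin_cases i <;>
    exact Submodule.smul_mem _ _ (Submodule.subset_span (by simp))

theorem isHomogeneousFor_diag_one_of (i : Fin 2) :
    IsHomogeneousFor (fun l => diag (1 : K) l) (of K i) := by
  fin_cases i
  · exact ⟨0, fun l => by simp⟩
  · exact ⟨1, fun l => by simp⟩

theorem isHomogeneousFor_diag_of_one (i : Fin 2) :
    IsHomogeneousFor (fun l => diag l (1 : K)) (of K i) := by
  fin_cases i
  · exact ⟨1, fun l => by simp⟩
  · exact ⟨0, fun l => by simp⟩

variable [Infinite K]

theorem mem_span_of_forall_diag_one_apply_eq {w : LieW K} (hw : ∀ l ≠ 0, diag 1 l w = w) :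
    w ∈ Submodule.span K ({of K 0, of K 1} : Set (LieW K)) := by
  rw [← apply_zero_eq_of_forall_ne_zero (F := fun l => diag 1 l) isHomogeneousFor_diag_one_of hw]
  exact diag_apply_mem_span_of_mul_eq_zero (mul_zero 1) w

theorem mem_span_of_forall_diag_apply_one_eq {w : LieW K} (hw : ∀ l ≠ 0, diag l 1 w = w) :
    w ∈ Submodule.span K ({of K 0, of K 1} : Set (LieW K)) := by
  rw [← apply_zero_eq_of_forall_ne_zero (F := fun l => diag l 1) isHomogeneousFor_diag_of_one hw]
  exact diag_apply_mem_span_of_mul_eq_zero (zero_mul 1) w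

theorem isLEndo_of_forall_diag_one_mul {f : LieEnd K} (hf : ∀ l ≠ 0, diag 1 l * f = f) :
    IsLEndo f :=
  fun _ => mem_span_of_forall_diag_one_apply_eq fun l hl => DFunLike.congr_fun (hf l hl) _

theorem isLEndo_of_forall_diag_mul_one {f : LieEnd K} (hf : ∀ l ≠ 0, diag l 1 * f = f) :
    IsLEndo f :=
  fun _ => mem_span_of_forall_diag_apply_one_eq fun l hl => DFunLike.congr_fun (hf l hl) _

theorem isLEndo_of_forall_exists_diag {f : LieEnd K}
    (hf : ∀ l ≠ 0, ∃ c : K, diag c (c * l) * f = f ∧ f * diag c (c * l) = f) :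
    IsLEndo f := by
  have hscalar : ∀ {c d : K}, f * diag c d = f → c • f (of K 0) = f (of K 0) ∧
      d • f (of K 1) = f (of K 1) := fun h =>
    ⟨by simpa using DFunLike.congr_fun h (of K 0), by simpa using DFunLike.congr_fun h (of K 1)⟩
  by_cases hx : f (of K 0) = 0
  · by_cases hy : f (of K 1) = 0
    · exact Fin.forall_fin_two.mpr ⟨hx ▸ zero_mem _, hy ▸ zero_mem _⟩
    refine isLEndo_of_forall_diag_mul_one fun l hl => ?_
    obtain ⟨c, hleft, hright⟩ := hf l⁻¹ (inv_ne_zero hl)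
    have hc : c * l⁻¹ = 1 :=
      smul_left_injective K hy <| by simpa using (hscalar hright).2
    rwa [hc, (mul_inv_eq_one₀ hl).mp hc] at hleft
  · refine isLEndo_of_forall_diag_one_mul fun l hl => ?_
    obtain ⟨c, hleft, hright⟩ := hf l hl
    have hc : c = 1 := smul_left_injective K hx <| by simpa using (hscalar hright).1
    rwa [hc, one_mul] at hleft

end LieEnd

open LieEnd

theorem IsCharacteristic.exists_apply_diag {K : Type*} [Field K] {T : MulAut (LieEnd K)}
    (hT : IsCharacteristic T) {a b : K} (ha : a ≠ 0) (hb : b ≠ 0) :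
    ∃ c : K, T (diag a b) = diag (c * a) (c * b) := by
  obtain ⟨χ, hχ⟩ := hT
  let u := diagUnit (Units.mk0 a ha) (Units.mk0 b hb)
  refine ⟨χ u, ?_⟩
  rw [show diag a b = u from rfl, hχ u, lieTau_eq_diag]
  exact diag_mul_diag ..

theorem IsCharacteristic.exists_diag_absorbed_by_apply_diag_one_zero {K : Type*} [Field K]
    {T : MulAut (LieEnd K)} (hT : IsCharacteristic T) {l : K} (hl : l ≠ 0) :
    ∃ c : K, diag c (c * l) * T (diag 1 0) = T (diag 1 0) ∧
      T (diag 1 0) * diag c (c * l) = T (diag 1 0) := by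
  obtain ⟨c, hc⟩ := hT.exists_apply_diag one_ne_zero hl
  rw [mul_one] at hc
  refine ⟨c, ?_, ?_⟩ <;> rw [← hc, ← map_mul, diag_mul_diag] <;> simp

/-- Over an infinite field, let `T` be a characteristic automorphism of the
endomorphism monoid of the free Lie algebra on the generators `x, y` and let `σ` be the
idempotent endomorphism with `σ x = x`, `σ y = 0`.  Then `T σ` is an `L`-endomorphism, i.e.
`T σ x` and `T σ y` lie in the linear span of `x` and `y`. -/
theorem characteristic_aut_idempotent_is_LEndo (K : Type*) [Field K] [Infinite K]
    (T : MulAut (LieEnd K)) (hT : IsCharacteristic T) :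
    IsLEndo (T (FreeLieAlgebra.lift K fun i : Fin 2 =>
      if i = 0 then FreeLieAlgebra.of K (0 : Fin 2) else 0)) := by
  rw [lift_ite_eq_diag_one_zero]
  exact isLEndo_of_forall_exists_diag fun _ hl =>
    hT.exists_diag_absorbed_by_apply_diag_one_zero hl
end
end

section
/- Let K be an infinite field, W the free Lie algebra over K on two generators x and y, and T a characteristic automorphism of End(W) which acts identically on the subsemigroup of L-endomorphisms. For p ∈ W let d(p) ∈ End(W) denote the endomorphism determined by d(p)(x) = p and d(p)(y) = y. Then there exists λ ∈ K, λ ≠ 0, such that T(d(p)) = τ_λ^{-1} ∘ d(p) ∘ τ_λ for every p ∈ W. -/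
/-! Let `φ p` be the image of `x` under `T (d p)`. Composing with `L`-endomorphisms, which `T`
fixes, shows that `T` replaces the images `u, v` of `x, y` under any endomorphism by `φ u, φ v`;
hence `φ` is linear, fixes `x` and `y`, is injective, and `φ (σ a) = (T σ) (φ a)`. In particular
`q = φ ⁅x, y⁆` is multiplied by `c` under both substitutions `x ↦ c x` and `y ↦ c y`; as `K` is
infinite, comparing bidegrees of Lie monomials gives `q = k ⁅x, y⁆` with `k ≠ 0`. Then `k • φ` is a
Lie endomorphism with `x ↦ k x`, `y ↦ k y`, i.e. `k • φ = τ_k`, and `λ = k⁻¹` works. -/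

noncomputable section

open FreeLieAlgebra

open Polynomial in
theorem Finset.sum_filter_eq_sum_of_forall_pow_smul {K V ι : Type*} [Field K] [Infinite K]
    [AddCommGroup V] [Module K V] (s : Finset ι) (v : ι → V) (n : ι → ℕ)
    (h : ∀ c : K, ∑ i ∈ s, c ^ n i • v i = c • ∑ i ∈ s, v i) :
    ∑ i ∈ s with n i = 1, v i = ∑ i ∈ s, v i := by
  rw [← sub_eq_zero, ← Module.forall_dual_apply_eq_zero_iff K]
  intro ℓ
  have hpoly : ∑ i ∈ s, monomial (n i) (ℓ (v i)) = monomial 1 (∑ i ∈ s, ℓ (v i)) := by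
    refine Polynomial.funext fun c => ?_
    simpa [eval_finsetSum, map_sum, Finset.mul_sum, mul_comm] using congrArg ℓ (h c)
  have hcoeff := congrArg (coeff · 1) hpoly
  simp only [finsetSum_coeff, coeff_monomial, if_true] at hcoeff
  simp [map_sum, Finset.sum_filter, apply_ite ℓ, hcoeff]

section Subst

variable {K : Type*} [Field K]

def subst (u v : LieW K) : LieEnd K := lift K ![u, v]

@[simp] lemma subst_x (u v : LieW K) : subst u v (of K 0) = u := by
  simp [subst, lift_of_apply]

@[simp] lemma subst_y (u v : LieW K) : subst u v (of K 1) = v := by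
  simp [subst, lift_of_apply]

lemma LieEnd.ext_of_s15 {f g : LieEnd K} (h0 : f (of K 0) = g (of K 0))
    (h1 : f (of K 1) = g (of K 1)) : f = g :=
  hom_ext (Fin.forall_fin_two.mpr ⟨h0, h1⟩)

@[simp] lemma comp_subst (F : LieEnd K) (u v : LieW K) :
    F.comp (subst u v) = subst (F u) (F v) :=
  LieEnd.ext_of_s15 (by simp) (by simp)

@[simp] lemma lieTau_of (l : K) (i : Fin 2) : lieTau K l (of K i) = l • of K i := by
  rw [lieTau, lift_of_apply]

lemma isLEndo_subst {u v : LieW K} (hu : u ∈ Submodule.span K {of K 0, of K 1})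
    (hv : v ∈ Submodule.span K {of K 0, of K 1}) : IsLEndo (subst u v) :=
  Fin.forall_fin_two.mpr ⟨by simpa using hu, by simpa using hv⟩

end Subst

theorem FreeLieAlgebra.lieSpan_range_of_s15 (R X : Type*) [CommRing R] :
    LieSubalgebra.lieSpan R (FreeLieAlgebra R X) (Set.range (of R)) = ⊤ := by
  set S := LieSubalgebra.lieSpan R (FreeLieAlgebra R X) (Set.range (of R))
  let f : FreeLieAlgebra R X →ₗ⁅R⁆ S :=
    lift R fun i => ⟨of R i, LieSubalgebra.subset_lieSpan ⟨i, rfl⟩⟩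
  have hf : S.incl.comp f = (LieHom.id : FreeLieAlgebra R X →ₗ⁅R⁆ _) :=
    hom_ext fun i => by simp [f]
  refine eq_top_iff.mpr fun w _ => ?_
  have hw : S.incl (f w) = w := LieHom.congr_fun hf w
  exact hw ▸ (f w).2

section Monomial

variable {K : Type*} [Field K]

inductive IsLieMonomial : LieW K → ℕ → ℕ → Prop
  | x : IsLieMonomial (of K 0) 1 0
  | y : IsLieMonomial (of K 1) 0 1
  | lie {a b : LieW K} {i j k l : ℕ} :
      IsLieMonomial a i j → IsLieMonomial b k l → IsLieMonomial ⁅a, b⁆ (i + k) (j + l)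

namespace IsLieMonomial

lemma one_le_add {m : LieW K} {i j : ℕ} (h : IsLieMonomial m i j) : 1 ≤ i + j := by
  induction h <;> omega

lemma eq_x {m : LieW K} {i j : ℕ} (h : IsLieMonomial m i j) (hi : i = 1) (hj : j = 0) :
    m = of K 0 := by
  cases h with
  | x => rfl
  | y => simp at hj
  | lie ha hb => have := ha.one_le_add; have := hb.one_le_add; omega

lemma eq_y {m : LieW K} {i j : ℕ} (h : IsLieMonomial m i j) (hi : i = 0) (hj : j = 1) :
    m = of K 1 := by
  cases h with
  | x => simp at hi
  | y => rfl
  | lie ha hb => have := ha.one_le_add; have := hb.one_le_add; omega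

lemma mem_span_lie_x_y {m : LieW K} (h : IsLieMonomial m 1 1) :
    m ∈ K ∙ ⁅of K (0 : Fin 2), of K 1⁆ := by
  suffices ∀ i j, IsLieMonomial m i j → i = 1 → j = 1 → m ∈ K ∙ ⁅of K (0 : Fin 2), of K 1⁆ from
    this 1 1 h rfl rfl
  rintro _ _ (_ | _ | @⟨a, b, i, j, k, l, ha, hb⟩) hi hj
  · omega
  · omega
  · have := ha.one_le_add; have := hb.one_le_add
    obtain ⟨rfl, rfl, rfl, rfl⟩ | ⟨rfl, rfl, rfl, rfl⟩ :
        (i = 1 ∧ j = 0 ∧ k = 0 ∧ l = 1) ∨ (i = 0 ∧ j = 1 ∧ k = 1 ∧ l = 0) := by omega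
    · rw [ha.eq_x rfl rfl, hb.eq_y rfl rfl]
      exact Submodule.mem_span_singleton_self _
    · rw [ha.eq_y rfl rfl, hb.eq_x rfl rfl, ← lie_skew (of K 1)]
      exact Submodule.neg_mem _ (Submodule.mem_span_singleton_self _)

lemma subst_smul_x (c : K) {m : LieW K} {i j : ℕ} (h : IsLieMonomial m i j) :
    subst (c • of K 0) (of K 1) m = c ^ i • m := by
  induction h with
  | x => simp
  | y => simp
  | lie _ _ iha ihb => rw [LieHom.map_lie, iha, ihb, smul_lie, lie_smul, smul_smul, pow_add]

lemma subst_smul_y (c : K) {m : LieW K} {i j : ℕ} (h : IsLieMonomial m i j) :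
    subst (of K 0) (c • of K 1) m = c ^ j • m := by
  induction h with
  | x => simp
  | y => simp
  | lie _ _ iha ihb => rw [LieHom.map_lie, iha, ihb, smul_lie, lie_smul, smul_smul, pow_add]

end IsLieMonomial

lemma span_isLieMonomial : Submodule.span K {m : LieW K | ∃ i j, IsLieMonomial m i j} = ⊤ := by
  rw [eq_top_iff]
  rintro w -
  have hw : w ∈ LieSubalgebra.lieSpan K (LieW K) (Set.range (of K)) := by
    rw [FreeLieAlgebra.lieSpan_range_of_s15]; trivial
  induction hw using LieSubalgebra.lieSpan_induction with
  | mem _ h =>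
    obtain ⟨i, rfl⟩ := h
    fin_cases i
    · exact Submodule.subset_span ⟨1, 0, .x⟩
    · exact Submodule.subset_span ⟨0, 1, .y⟩
  | zero => exact zero_mem _
  | add _ _ _ _ ha hb => exact add_mem ha hb
  | smul c _ _ ha => exact Submodule.smul_mem _ c ha
  | lie a b _ _ ha hb =>
    have := Submodule.apply_mem_map₂
      (LinearMap.mk₂ K (fun a b : LieW K => ⁅a, b⁆) add_lie smul_lie lie_add lie_smul) ha hb
    rw [Submodule.map₂_span_span] at this
    refine Submodule.span_mono ?_ this
    rintro _ ⟨a, ⟨i, j, ha⟩, b, ⟨k, l, hb⟩, rfl⟩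
    exact ⟨_, _, .lie ha hb⟩

lemma lie_x_y_ne_zero : (⁅of K (0 : Fin 2), of K 1⁆ : LieW K) ≠ 0 := by
  let _ : LieRing (Matrix (Fin 2) (Fin 2) K) := LieRing.ofAssociativeRing
  let ρ : LieW K →ₗ⁅K⁆ Matrix (Fin 2) (Fin 2) K :=
    lift K ![Matrix.single 0 1 1, Matrix.single 1 0 1]
  intro h
  have h00 := congrFun (congrFun (congrArg ρ h) 0) 0
  simp [ρ, lift_of_apply, Ring.lie_def] at h00

lemma mem_span_lie_x_y_of_scaling [Infinite K] {q : LieW K}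
    (hx : ∀ c : K, subst (c • of K 0) (of K 1) q = c • q)
    (hy : ∀ c : K, subst (of K 0) (c • of K 1) q = c • q) :
    q ∈ K ∙ ⁅of K (0 : Fin 2), of K 1⁆ := by
  have hq : q ∈ Submodule.span K {m : LieW K | ∃ i j, IsLieMonomial m i j} := by
    rw [span_isLieMonomial]; trivial
  obtain ⟨n, f, m, hsum⟩ := Submodule.mem_span_set'.mp hq
  choose a b hm using fun i => (m i).2
  have hxsum : ∑ i with a i = 1, f i • (m i : LieW K) = q := by
    refine (Finset.sum_filter_eq_sum_of_forall_pow_smul (K := K) _ _ _ fun c => ?_).trans hsum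
    rw [hsum, ← hx c, ← hsum, map_sum]
    simp [(hm _).subst_smul_x, smul_comm (f _)]
  have hxysum : ∑ i ∈ {i | a i = 1} with b i = 1, f i • (m i : LieW K) = q := by
    refine (Finset.sum_filter_eq_sum_of_forall_pow_smul (K := K) _ _ _ fun c => ?_).trans hxsum
    rw [hxsum, ← hy c, ← hxsum, map_sum]
    simp [(hm _).subst_smul_y, smul_comm (f _)]
  rw [← hxysum]
  refine Submodule.sum_mem _ fun i hi => Submodule.smul_mem _ _ ?_
  simp only [Finset.mem_filter] at hi
  exact (hi.1.2 ▸ hi.2 ▸ hm i).mem_span_lie_x_y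

end Monomial

section FixingLEndos

variable {K : Type*} [Field K] {T : MulAut (LieEnd K)}

lemma of_mem_span_gens (i : Fin 2) : of K i ∈ Submodule.span K {of K 0, of K 1} :=
  Submodule.subset_span (by fin_cases i <;> simp)

def coordMap (T : MulAut (LieEnd K)) (p : LieW K) : LieW K := T (subst p (of K 1)) (of K 0)

lemma map_mul_of_isLEndo (hid : ∀ σ : LieEnd K, IsLEndo σ → T σ = σ) (F : LieEnd K)
    {σ : LieEnd K} (hσ : IsLEndo σ) : T (F * σ) = T F * σ := by
  rw [map_mul, hid σ hσ]

lemma coordMap_of_mem_span (hid : ∀ σ : LieEnd K, IsLEndo σ → T σ = σ) {v : LieW K}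
    (hv : v ∈ Submodule.span K {of K 0, of K 1}) : coordMap T v = v := by
  rw [coordMap, hid _ (isLEndo_subst hv (of_mem_span_gens 1)), subst_x]

lemma map_subst (hid : ∀ σ : LieEnd K, IsLEndo σ → T σ = σ) (u v : LieW K) :
    T (subst u v) = subst (coordMap T u) (coordMap T v) := by
  -- composing on the right with `x ↦ x, y ↦ 0` and with `x, y ↦ y` isolates the two coordinates
  have hx : T (subst u v) * subst (of K 0) 0 = T (subst u (of K 1)) * subst (of K 0) 0 := by
    rw [← map_mul_of_isLEndo hid, ← map_mul_of_isLEndo hid] <;>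
      simp [isLEndo_subst, of_mem_span_gens]
  have hy : T (subst u v) * subst (of K 1) (of K 1)
      = T (subst v (of K 1)) * subst (of K 0) (of K 0) := by
    rw [← map_mul_of_isLEndo hid, ← map_mul_of_isLEndo hid] <;>
      simp [isLEndo_subst, of_mem_span_gens]
  exact LieEnd.ext_of_s15 (by simpa [coordMap] using LieHom.congr_fun hx (of K 0))
    (by simpa [coordMap] using LieHom.congr_fun hy (of K 0))

lemma coordMap_subst (hid : ∀ σ : LieEnd K, IsLEndo σ → T σ = σ) (u w a : LieW K) :
    coordMap T (subst u w a) = subst (coordMap T u) (coordMap T w) (coordMap T a) := by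
  have h := map_mul T (subst u w) (subst a (of K 1))
  simp only [LieEnd.mul_def, comp_subst, subst_y, map_subst hid,
    coordMap_of_mem_span hid (of_mem_span_gens 1)] at h
  simpa using LieHom.congr_fun h (of K 0)

lemma coordMap_add (hid : ∀ σ : LieEnd K, IsLEndo σ → T σ = σ) (u w : LieW K) :
    coordMap T (u + w) = coordMap T u + coordMap T w := by
  have h := coordMap_subst hid u w (of K 0 + of K 1)
  rwa [coordMap_of_mem_span hid (add_mem (of_mem_span_gens 0) (of_mem_span_gens 1)), map_add,
    subst_x, subst_y, map_add, subst_x, subst_y] at h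

lemma coordMap_smul (hid : ∀ σ : LieEnd K, IsLEndo σ → T σ = σ) (c : K) (u : LieW K) :
    coordMap T (c • u) = c • coordMap T u := by
  have h := coordMap_subst hid u u (c • of K 0)
  rwa [coordMap_of_mem_span hid (Submodule.smul_mem _ c (of_mem_span_gens 0)), map_smul,
    subst_x, map_smul, subst_x] at h

lemma isLinearMap_coordMap (hid : ∀ σ : LieEnd K, IsLEndo σ → T σ = σ) :
    IsLinearMap K (coordMap T) :=
  ⟨coordMap_add hid, coordMap_smul hid⟩

lemma coordMap_injective (hid : ∀ σ : LieEnd K, IsLEndo σ → T σ = σ) :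
    Function.Injective (coordMap T) := by
  intro a b hab
  have h : subst a (of K 1) = subst b (of K 1) :=
    T.injective (by rw [map_subst hid, map_subst hid, hab])
  simpa using LieHom.congr_fun h (of K 0)

lemma coordMap_lie (hid : ∀ σ : LieEnd K, IsLEndo σ → T σ = σ) (u w : LieW K) :
    coordMap T ⁅u, w⁆ =
      subst (coordMap T u) (coordMap T w) (coordMap T ⁅of K (0 : Fin 2), of K 1⁆) := by
  rw [← coordMap_subst hid, LieHom.map_lie, subst_x, subst_y]

lemma exists_ne_zero_coordMap_lie [Infinite K] (hid : ∀ σ : LieEnd K, IsLEndo σ → T σ = σ) :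
    ∃ k ≠ (0 : K), ∀ u w, coordMap T ⁅u, w⁆ = k • ⁅coordMap T u, coordMap T w⁆ := by
  have hx := of_mem_span_gens (K := K) 0
  have hy := of_mem_span_gens (K := K) 1
  obtain ⟨k, hk⟩ := Submodule.mem_span_singleton.mp <| mem_span_lie_x_y_of_scaling
    (q := coordMap T ⁅of K (0 : Fin 2), of K 1⁆)
    (fun c => by
      have h := coordMap_lie hid (c • of K (0 : Fin 2)) (of K 1)
      rwa [smul_lie, coordMap_smul hid, coordMap_of_mem_span hid (Submodule.smul_mem _ c hx),
        coordMap_of_mem_span hid hy, eq_comm] at h)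
    (fun c => by
      have h := coordMap_lie hid (of K (0 : Fin 2)) (c • of K 1)
      rwa [lie_smul, coordMap_smul hid, coordMap_of_mem_span hid (Submodule.smul_mem _ c hy),
        coordMap_of_mem_span hid hx, eq_comm] at h)
  refine ⟨k, ?_, fun u w => ?_⟩
  · rintro rfl
    refine lie_x_y_ne_zero (coordMap_injective hid ?_)
    rw [← hk, zero_smul]
    exact (isLinearMap_coordMap hid).map_zero.symm
  · rw [coordMap_lie hid, ← hk, map_smul, LieHom.map_lie, subst_x, subst_y]

end FixingLEndos

lemma eq_inv_smul_lieTau_of_map_lie {K : Type*} [Field K] {φ : LieW K → LieW K}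
    (hlin : IsLinearMap K φ)
    (hx : φ (of K 0) = of K 0) (hy : φ (of K 1) = of K 1) {k : K} (hk : k ≠ 0)
    (hlie : ∀ u w, φ ⁅u, w⁆ = k • ⁅φ u, φ w⁆) (p : LieW K) :
    φ p = k⁻¹ • lieTau K k p := by
  let ψ : LieEnd K :=
    { k • hlin.mk' φ with
      map_lie' := fun {u w} => by
        simp only [AddHom.toFun_eq_coe, LinearMap.coe_toAddHom, LinearMap.smul_apply,
          IsLinearMap.mk'_apply, hlie, smul_lie, lie_smul, smul_smul] }
  have hψ (v : LieW K) : ψ v = k • φ v := rfl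
  have hψτ : ψ = lieTau K k := LieEnd.ext_of_s15 (by simp [hψ, hx]) (by simp [hψ, hy])
  rw [← hψτ, hψ, smul_smul, inv_mul_cancel₀ hk, one_smul]

theorem characteristic_aut_on_dp_endos_general (K : Type*) [Field K] [Infinite K]
    (T : MulAut (LieEnd K))
    (hid : ∀ σ : LieEnd K, IsLEndo σ → T σ = σ)
    (d : LieW K → LieEnd K)
    (hd : ∀ p : LieW K, d p = FreeLieAlgebra.lift K fun i : Fin 2 =>
      if i = 0 then p else FreeLieAlgebra.of K (1 : Fin 2)) :
    ∃ l : K, l ≠ 0 ∧ ∀ p : LieW K,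
      T (d p) = (lieTau K l⁻¹).comp ((d p).comp (lieTau K l)) := by
  obtain ⟨k, hk, hlie⟩ := exists_ne_zero_coordMap_lie hid
  have hy := coordMap_of_mem_span hid (of_mem_span_gens 1)
  have hφ := eq_inv_smul_lieTau_of_map_lie (isLinearMap_coordMap hid)
    (coordMap_of_mem_span hid (of_mem_span_gens 0)) hy hk hlie
  refine ⟨k⁻¹, inv_ne_zero hk, fun p => ?_⟩
  have hdp : d p = subst p (of K 1) := by
    rw [hd]; exact LieEnd.ext_of_s15 (by simp [lift_of_apply]) (by simp [lift_of_apply])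
  rw [hdp, map_subst hid, hy]
  exact LieEnd.ext_of_s15 (by simpa [smul_smul, hk] using hφ p) (by simp [smul_smul, hk])

/-- Over an infinite field, let `T` be a characteristic automorphism of the
endomorphism monoid of the free Lie algebra on generators `x, y` acting identically on the
`L`-endomorphisms, and for `p ∈ W` let `d p` be the endomorphism with `(d p) x = p`,
`(d p) y = y`.  Then there is `λ ≠ 0` with `T (d p) = τ_λ⁻¹ ∘ d p ∘ τ_λ` for every `p`. -/
theorem characteristic_aut_on_dp_endos (K : Type*) [Field K] [Infinite K]
    (T : MulAut (LieEnd K)) (hT : IsCharacteristic T)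
    (hid : ∀ σ : LieEnd K, IsLEndo σ → T σ = σ)
    (d : LieW K → LieEnd K)
    (hd : ∀ p : LieW K, d p = FreeLieAlgebra.lift K fun i : Fin 2 =>
      if i = 0 then p else FreeLieAlgebra.of K (1 : Fin 2)) :
    ∃ l : K, l ≠ 0 ∧ ∀ p : LieW K,
      T (d p) = (lieTau K l⁻¹).comp ((d p).comp (lieTau K l)) :=
  characteristic_aut_on_dp_endos_general K T hid d hd
end
end
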